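/- arXiv:2003.11490 — 6 statements merged into one kernel-verified Lean document; each statement's English description precedes it below -/
import Mathlib

section
/- (van Schooten's theorem) Let A₁A₂A₃ be an equilateral triangle and let P be a point on the arc of the circumcircle of A₁A₂A₃ between A₁ and A₂ not containing A₃. Then |A₁P| + |A₂P| = |A₃P|. -/
/-!
Ptolemy's theorem for the cyclic quadrilateral A₁PA₂A₃ gives
|A₁P|·|A₂A₃| + |A₂P|·|A₃A₁| = |A₁A₂|·|A₃P|, and the common side length cancels.
Ptolemy applies because the diagonals A₁A₂ and A₃P cross: a line in the plane has only two
sides, so P lies on the side of A₁A₂ opposite to A₃ and the segment A₃P meets the line A₁A₂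
inside the circle, i.e. strictly between A₁ and A₂. If P is on the line A₁A₂, it is A₁ or A₂.
-/

open EuclideanGeometry Module

section Plane
variable {R V P : Type*} [Field R] [LinearOrder R] [IsStrictOrderedRing R] [AddCommGroup V]
  [Module R V] [AddTorsor V P]

theorem sSameSide_or_sOppSide_of_finrank_eq_two (hd : finrank R V = 2) {A B x y : P}
    (hAB : A ≠ B) (hx : x ∉ line[R, A, B]) (hy : y ∉ line[R, A, B]) :
    line[R, A, B].SSameSide x y ∨ line[R, A, B].SOppSide x y := by
  -- `B -ᵥ A, x -ᵥ A` is a basis; the sign of the second coordinate of `y -ᵥ A` decides the side.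
  have hli : LinearIndependent R ![B -ᵥ A, x -ᵥ A] := by
    refine (LinearIndependent.pair_iff' (vsub_ne_zero.2 hAB.symm)).2 fun a ha => hx ?_
    rw [← vsub_vadd x A, ← ha]
    exact smul_vsub_vadd_mem_affineSpan_pair a A B
  have hspan := hli.span_eq_top_of_card_eq_finrank (by simp [hd])
  obtain ⟨β, α, hαβ⟩ : ∃ β α : R, β • (B -ᵥ A) + α • (x -ᵥ A) = y -ᵥ A := by
    rw [← Submodule.mem_span_pair, ← Matrix.range_cons_cons_empty, hspan]
    exact Submodule.mem_top
  have hA : A ∈ line[R, A, B] := left_mem_affineSpan_pair R A B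
  have hQl : β • (B -ᵥ A) +ᵥ A ∈ line[R, A, B] := smul_vsub_vadd_mem_affineSpan_pair β A B
  have hyQ : y -ᵥ (β • (B -ᵥ A) +ᵥ A) = α • (x -ᵥ A) := by
    rw [vsub_vadd_eq_vsub_sub, ← hαβ]; abel
  rcases le_total 0 α with hα | hα
  · refine .inl ((AffineSubspace.sSameSide_iff_exists_left hA).2 ⟨hx, hy, _, hQl, ?_⟩)
    rw [hyQ]
    exact SameRay.sameRay_nonneg_smul_right _ hα
  · refine .inr ((AffineSubspace.sOppSide_iff_exists_left hA).2 ⟨hx, hy, _, hQl, ?_⟩)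
    rw [← neg_vsub_eq_vsub_rev y, hyQ, ← neg_smul]
    exact SameRay.sameRay_nonneg_smul_right _ (neg_nonneg.2 hα)

end Plane

section Circle
variable {V P : Type*} [NormedAddCommGroup V] [InnerProductSpace ℝ V] [MetricSpace P]
  [NormedAddTorsor V P]

theorem eq_or_eq_of_mem_sphere_of_mem_affineSpan_pair {s : Sphere P} {A B Z : P}
    (hA : A ∈ s) (hB : B ∈ s) (hZ : Z ∈ s) (hAB : A ≠ B) (hZl : Z ∈ line[ℝ, A, B]) :
    Z = A ∨ Z = B := by
  by_contra! hne
  have hcol : Collinear ℝ {A, Z, B} := by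
    rw [Set.insert_comm]; exact collinear_insert_of_mem_affineSpan_pair hZl
  have hAZB : Sbtw ℝ A Z B :=
    ⟨wbtw_of_collinear_of_dist_center_le_radius hcol hA (mem_sphere.1 hZ).le hB hAB, hne⟩
  have hlt := hAZB.dist_lt_max_dist s.center
  rw [mem_sphere.1 hA, mem_sphere.1 hB, mem_sphere.1 hZ, max_self] at hlt
  exact lt_irrefl _ hlt

theorem exists_sbtw_sbtw_of_not_sSameSide (hd : finrank ℝ V = 2) {s : Sphere P} {A B C D : P}
    (hA : A ∈ s) (hB : B ∈ s) (hC : C ∈ s) (hD : D ∈ s) (hAB : A ≠ B)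
    (hCl : C ∉ line[ℝ, A, B]) (hDl : D ∉ line[ℝ, A, B])
    (hCD : ¬ line[ℝ, A, B].SSameSide C D) :
    ∃ X, Sbtw ℝ A X B ∧ Sbtw ℝ C X D := by
  obtain ⟨X, hXl, hCXD⟩ :=
    ((sSameSide_or_sOppSide_of_finrank_eq_two hd hAB hCl hDl).resolve_left hCD).exists_sbtw
  have hcol : Collinear ℝ {A, X, B} := by
    rw [Set.insert_comm]; exact collinear_insert_of_mem_affineSpan_pair hXl
  refine ⟨X, sbtw_of_collinear_of_dist_center_lt_radius hcol hA ?_ hB hAB, hCXD⟩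
  rw [dist_comm]
  exact s.dist_center_lt_radius_of_sbtw hC hD hCXD

theorem dist_add_dist_eq_dist_of_sbtw_of_sbtw {A₁ A₂ A₃ p x : P}
    (h₁₂ : dist A₁ A₂ = dist A₂ A₃) (h₂₃ : dist A₂ A₃ = dist A₃ A₁) (hnz : dist A₁ A₂ ≠ 0)
    (hcos : Cospherical ({A₁, A₃, A₂, p} : Set P))
    (hx₁₂ : Sbtw ℝ A₁ x A₂) (hx₃p : Sbtw ℝ A₃ x p) :
    dist A₁ p + dist A₂ p = dist A₃ p := by
  have hptolemy := mul_dist_add_mul_dist_eq_mul_dist_of_cospherical hcos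
    hx₁₂.angle₁₂₃_eq_pi hx₃p.angle₁₂₃_eq_pi
  rw [dist_comm A₁ A₃, ← h₂₃, dist_comm A₃ A₂, ← h₁₂, dist_comm p A₁, ← mul_add] at hptolemy
  rw [add_comm]
  exact mul_left_cancel₀ hnz hptolemy

end Circle

/-- van Schooten's theorem: if A₁A₂A₃ is an equilateral triangle inscribed in a
circle of center O and P is a point of that circle on the arc between A₁ and A₂
not containing A₃ (i.e. P is not strictly on the same side of line A₁A₂ as A₃),
then |A₁P| + |A₂P| = |A₃P|. -/
theorem stmt8 (A₁ A₂ A₃ P O : EuclideanSpace ℝ (Fin 2)) (r : ℝ)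
    (h₁₂ : dist A₁ A₂ = dist A₂ A₃) (h₂₃ : dist A₂ A₃ = dist A₃ A₁)
    (hnz : dist A₁ A₂ ≠ 0)
    (hc₁ : dist O A₁ = r) (hc₂ : dist O A₂ = r) (hc₃ : dist O A₃ = r)
    (hP : dist O P = r)
    (harc : ¬ (affineSpan ℝ {A₁, A₂}).SSameSide A₃ P) :
    dist A₁ P + dist A₂ P = dist A₃ P := by
  let s : Sphere (EuclideanSpace ℝ (Fin 2)) := ⟨O, r⟩
  have mem_s {Z} (h : dist O Z = r) : Z ∈ s := mem_sphere'.2 h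
  have hA₁₂ : A₁ ≠ A₂ := dist_ne_zero.1 hnz
  have hA₃ : A₃ ∉ line[ℝ, A₁, A₂] := fun h => by
    rcases eq_or_eq_of_mem_sphere_of_mem_affineSpan_pair (mem_s hc₁) (mem_s hc₂) (mem_s hc₃)
      hA₁₂ h with rfl | rfl
    · exact hnz (by rw [h₁₂, h₂₃, dist_self])
    · exact hnz (by rw [h₁₂, dist_self])
  by_cases hPl : P ∈ line[ℝ, A₁, A₂]
  · rcases eq_or_eq_of_mem_sphere_of_mem_affineSpan_pair (mem_s hc₁) (mem_s hc₂) (mem_s hP)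
      hA₁₂ hPl with rfl | rfl
    · rw [dist_self, zero_add, dist_comm, h₁₂, h₂₃]
    · rw [dist_self, add_zero, h₁₂, dist_comm]
  obtain ⟨X, hX₁₂, hX₃P⟩ := exists_sbtw_sbtw_of_not_sSameSide finrank_euclideanSpace_fin
    (mem_s hc₁) (mem_s hc₂) (mem_s hc₃) (mem_s hP) hA₁₂ hA₃ hPl harc
  have hcos : Cospherical ({A₁, A₃, A₂, P} : Set (EuclideanSpace ℝ (Fin 2))) :=
    ⟨O, r, by rintro _ (rfl | rfl | rfl | rfl) <;> rwa [dist_comm]⟩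
  exact dist_add_dist_eq_dist_of_sbtw_of_sbtw h₁₂ h₂₃ hnz hcos hX₁₂ hX₃P
end

section
/- Let A₁ = (-1,0), A₂ = (1,0), A₃ = (0,√3). For every point P on the circumcircle {(x,y) : x² + (y - √3/3)² = 4/3}, one of the three equations |A₁P| + |A₂P| = |A₃P|, |A₂P| + |A₃P| = |A₁P|, or |A₃P| + |A₁P| = |A₂P| holds. -/
/-- Euclidean distance in the real plane. -/
noncomputable def edist2 (p q : ℝ × ℝ) : ℝ := Real.sqrt ((p.1 - q.1)^2 + (p.2 - q.2)^2)

/-- For A₁ = (-1,0), A₂ = (1,0), A₃ = (0,√3) and any P on the circumcircle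
x² + (y - √3/3)² = 4/3, one of the three equations |A₁P| + |A₂P| = |A₃P|,
|A₂P| + |A₃P| = |A₁P|, |A₃P| + |A₁P| = |A₂P| holds. -/
theorem stmt10 (x y : ℝ) (hP : x^2 + (y - Real.sqrt 3/3)^2 = 4/3) :
    edist2 ((-1 : ℝ), (0 : ℝ)) (x, y) + edist2 ((1 : ℝ), (0 : ℝ)) (x, y)
        = edist2 ((0 : ℝ), Real.sqrt 3) (x, y)
    ∨ edist2 ((1 : ℝ), (0 : ℝ)) (x, y) + edist2 ((0 : ℝ), Real.sqrt 3) (x, y)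
        = edist2 ((-1 : ℝ), (0 : ℝ)) (x, y)
    ∨ edist2 ((0 : ℝ), Real.sqrt 3) (x, y) + edist2 ((-1 : ℝ), (0 : ℝ)) (x, y)
        = edist2 ((1 : ℝ), (0 : ℝ)) (x, y) := by
  set s := Real.sqrt 3 with hsdef
  have hs : s ^ 2 = 3 := Real.sq_sqrt (by norm_num)
  set a : ℝ := (-1 - x)^2 + (0 - y)^2 with ha
  set b : ℝ := (1 - x)^2 + (0 - y)^2 with hb
  set c : ℝ := (0 - x)^2 + (s - y)^2 with hc
  have hanneg : 0 ≤ a := by positivity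
  have hbnneg : 0 ≤ b := by positivity
  have hcnneg : 0 ≤ c := by positivity
  have key : 2*(a*b + b*c + c*a) - (a^2 + b^2 + c^2) = 0 := by
    rw [ha, hb, hc]
    linear_combination (3*x^2 + 3*y^2 - 2*s*y - 3) * hP +
      (2*x^2 + 1 - (10:ℝ)/3*y^2 + 4*s*y - s^2 - (1:ℝ)/3*x^2 + (2:ℝ)/9*y*s - (1:ℝ)/3*y^2 + (1:ℝ)/3) * hs
  set d1 := edist2 ((-1 : ℝ), (0 : ℝ)) (x, y) with hd1
  set d2 := edist2 ((1 : ℝ), (0 : ℝ)) (x, y) with hd2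
  set d3 := edist2 ((0 : ℝ), s) (x, y) with hd3
  have h1 : d1 ^ 2 = a := by rw [hd1, edist2]; exact Real.sq_sqrt hanneg
  have h2 : d2 ^ 2 = b := by rw [hd2, edist2]; exact Real.sq_sqrt hbnneg
  have h3 : d3 ^ 2 = c := by rw [hd3, edist2]; exact Real.sq_sqrt hcnneg
  have hn1 : 0 ≤ d1 := Real.sqrt_nonneg _
  have hn2 : 0 ≤ d2 := Real.sqrt_nonneg _
  have hn3 : 0 ≤ d3 := Real.sqrt_nonneg _
  have hprod : (d1 + d2 + d3) * ((-d1 + d2 + d3) * ((d1 - d2 + d3) * (d1 + d2 - d3))) = 0 := by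
    linear_combination key + (2*d2^2+2*d3^2-d1^2-a)*h1 + (2*a+2*d3^2-d2^2-b)*h2 + (2*a+2*b-d3^2-c)*h3
  rcases mul_eq_zero.mp hprod with h0 | h0
  · exfalso
    have e1 : d1 = 0 := by linarith
    have e2 : d2 = 0 := by linarith
    have : a = 0 := by rw [← h1, e1]; ring
    have hb0 : b = 0 := by rw [← h2, e2]; ring
    rw [ha] at this; rw [hb] at hb0
    nlinarith [sq_nonneg y]
  rcases mul_eq_zero.mp h0 with h0 | h0
  · exact Or.inr (Or.inl (by linarith))
  rcases mul_eq_zero.mp h0 with h0 | h0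
  · exact Or.inr (Or.inr (by linarith))
  · exact Or.inl (by linarith)
end

section
/- Conversely, if P ∈ ℝ² satisfies |A₁P| + |A₂P| = |A₃P| with A₁ = (-1,0), A₂ = (1,0), A₃ = (0,√3), then P lies on the circumcircle x² + (y - √3/3)² = 4/3. -/
/-- If P = (x,y) satisfies |A₁P| + |A₂P| = |A₃P| with A₁ = (-1,0), A₂ = (1,0),
A₃ = (0,√3), then P lies on the circumcircle x² + (y - √3/3)² = 4/3. -/
theorem stmt11 (x y : ℝ)
    (h : edist2 ((-1 : ℝ), (0 : ℝ)) (x, y) + edist2 ((1 : ℝ), (0 : ℝ)) (x, y)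
        = edist2 ((0 : ℝ), Real.sqrt 3) (x, y)) :
    x^2 + (y - Real.sqrt 3/3)^2 = 4/3 := by
  simp only [edist2] at h
  have hu0 : (0:ℝ) ≤ ((-1 : ℝ) - x)^2 + ((0:ℝ) - y)^2 := by positivity
  have hv0 : (0:ℝ) ≤ ((1 : ℝ) - x)^2 + ((0:ℝ) - y)^2 := by positivity
  have hw0 : (0:ℝ) ≤ ((0 : ℝ) - x)^2 + (Real.sqrt 3 - y)^2 := by positivity
  set a := Real.sqrt (((-1 : ℝ) - x)^2 + ((0:ℝ) - y)^2) with ha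
  set b := Real.sqrt (((1 : ℝ) - x)^2 + ((0:ℝ) - y)^2) with hb
  set c := Real.sqrt (((0 : ℝ) - x)^2 + (Real.sqrt 3 - y)^2) with hc
  have hsu : a ^ 2 = ((-1 : ℝ) - x)^2 + ((0:ℝ) - y)^2 := Real.sq_sqrt hu0
  have hsv : b ^ 2 = ((1 : ℝ) - x)^2 + ((0:ℝ) - y)^2 := Real.sq_sqrt hv0
  have hsw : c ^ 2 = ((0 : ℝ) - x)^2 + (Real.sqrt 3 - y)^2 := Real.sq_sqrt hw0
  have hmul : a * b = Real.sqrt ((((-1 : ℝ) - x)^2 + ((0:ℝ) - y)^2)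
      * (((1 : ℝ) - x)^2 + ((0:ℝ) - y)^2)) := (Real.sqrt_mul hu0 _).symm
  have hsq : (a * b) ^ 2 = (((-1 : ℝ) - x)^2 + ((0:ℝ) - y)^2)
      * (((1 : ℝ) - x)^2 + ((0:ℝ) - y)^2) := by
    rw [hmul]; exact Real.sq_sqrt (by positivity)
  -- squaring h : a + b = c
  have key : (((-1 : ℝ) - x)^2 + ((0:ℝ) - y)^2) + (((1 : ℝ) - x)^2 + ((0:ℝ) - y)^2)
      + 2 * (a * b) = ((0 : ℝ) - x)^2 + (Real.sqrt 3 - y)^2 := by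
    have h2 : (a + b) ^ 2 = c ^ 2 := by rw [h]
    nlinarith [h2, hsu, hsv, hsw]
  -- squaring again
  have h4 : 4 * ((((-1 : ℝ) - x)^2 + ((0:ℝ) - y)^2) * (((1 : ℝ) - x)^2 + ((0:ℝ) - y)^2))
      = ((((0 : ℝ) - x)^2 + (Real.sqrt 3 - y)^2)
        - (((-1 : ℝ) - x)^2 + ((0:ℝ) - y)^2) - (((1 : ℝ) - x)^2 + ((0:ℝ) - y)^2))^2 := by
    nlinarith [key, hsq]
  have h3 : Real.sqrt 3 ^ 2 = 3 := Real.sq_sqrt (by norm_num)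
  have hz : (Real.sqrt 3 * (x^2 + y^2 - 1) - 2*y)^2 = 0 := by
    linear_combination h4 + ((x^2+y^2)^2 + Real.sqrt 3 ^ 2 - 4*Real.sqrt 3*y - 4*x^2) * h3
  have hz0 : Real.sqrt 3 * (x^2 + y^2 - 1) - 2*y = 0 := by
    exact pow_eq_zero_iff (n := 2) (by norm_num) |>.mp hz
  linear_combination (Real.sqrt 3/3) * hz0 + (4/9 - (x^2+y^2)/3) * h3
end

section
/- If P ∈ ℝ² satisfies (|A₁P| + |A₂P| - |A₃P|)·(|A₂P| + |A₃P| - |A₁P|)·(|A₃P| + |A₁P| - |A₂P|)·(|A₁P| + |A₂P| + |A₃P|) = 0 with A₁ = (-1,0), A₂ = (1,0), A₃ = (0,√3), then D(x,y) = 3x⁴ + 3y⁴ + 6x²y² - 6x² - 10y² + 3 = 0 where P = (x,y). -/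
/-- If (a+b-c)(b+c-a)(c+a-b)(a+b+c) = 0 where a,b,c are the distances from
P = (x,y) to A₁ = (-1,0), A₂ = (1,0), A₃ = (0,√3), then
3x⁴ + 3y⁴ + 6x²y² - 6x² - 10y² + 3 = 0. -/
theorem stmt12 (x y : ℝ)
    (h : (edist2 ((-1 : ℝ), (0 : ℝ)) (x, y) + edist2 ((1 : ℝ), (0 : ℝ)) (x, y)
            - edist2 ((0 : ℝ), Real.sqrt 3) (x, y))
        * (edist2 ((1 : ℝ), (0 : ℝ)) (x, y) + edist2 ((0 : ℝ), Real.sqrt 3) (x, y)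
            - edist2 ((-1 : ℝ), (0 : ℝ)) (x, y))
        * (edist2 ((0 : ℝ), Real.sqrt 3) (x, y) + edist2 ((-1 : ℝ), (0 : ℝ)) (x, y)
            - edist2 ((1 : ℝ), (0 : ℝ)) (x, y))
        * (edist2 ((-1 : ℝ), (0 : ℝ)) (x, y) + edist2 ((1 : ℝ), (0 : ℝ)) (x, y)
            + edist2 ((0 : ℝ), Real.sqrt 3) (x, y)) = 0) :
    3*x^4 + 3*y^4 + 6*x^2*y^2 - 6*x^2 - 10*y^2 + 3 = 0 := by
  set s : ℝ := Real.sqrt 3 with hsdef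
  have hs : s ^ 2 = 3 := Real.sq_sqrt (by norm_num)
  set a : ℝ := edist2 ((-1 : ℝ), (0 : ℝ)) (x, y) with hadef
  set b : ℝ := edist2 ((1 : ℝ), (0 : ℝ)) (x, y) with hbdef
  set c : ℝ := edist2 ((0 : ℝ), s) (x, y) with hcdef
  have ha2 : a ^ 2 = (x + 1) ^ 2 + y ^ 2 := by
    rw [hadef, edist2, Real.sq_sqrt (by positivity)]; ring
  have hb2 : b ^ 2 = (x - 1) ^ 2 + y ^ 2 := by
    rw [hbdef, edist2, Real.sq_sqrt (by positivity)]; ring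
  have hc2 : c ^ 2 = x ^ 2 + (y - s) ^ 2 := by
    rw [hcdef, edist2, Real.sq_sqrt (by positivity)]; ring
  have hE : 3 * (x ^ 2 + y ^ 2 - 2 / 3 * s * y - 1) ^ 2 = 0 := by
    linear_combination h
      - (2 * b ^ 2 + 2 * c ^ 2 - a ^ 2 - ((x + 1) ^ 2 + y ^ 2)) * ha2
      - (2 * ((x + 1) ^ 2 + y ^ 2) + 2 * c ^ 2 - b ^ 2 - ((x - 1) ^ 2 + y ^ 2)) * hb2
      - (2 * ((x + 1) ^ 2 + y ^ 2) + 2 * ((x - 1) ^ 2 + y ^ 2) - c ^ 2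
          - (x ^ 2 + (y - s) ^ 2)) * hc2
      - (1 - s ^ 2 + 4 * y * s - 10 / 3 * y ^ 2 + 2 * x ^ 2) * hs
  have hQ : x ^ 2 + y ^ 2 - 2 / 3 * s * y - 1 = 0 := by
    have h2 : (x ^ 2 + y ^ 2 - 2 / 3 * s * y - 1) ^ 2 = 0 := by linarith
    exact pow_eq_zero_iff (two_ne_zero) |>.mp h2
  linear_combination (3 * (x ^ 2 + y ^ 2 + 2 / 3 * s * y - 1)) * hQ + (4 / 3 * y ^ 2) * hs
end

section
/- Every point P = (x,y) with (±|A₁P| ± |A₂P| ± |A₃P|)² = 1 for some choice of signs, where A₁ = (-1,0), A₂ = (0,0), A₃ = (1,0), satisfies C(x,y) = 9x⁸ + 9y⁸ + 36x²y⁶ + 54x⁴y⁴ + 36x⁶y² - 100x⁶ - 4y⁶ - 108x²y⁴ - 204x⁴y² + 182x⁴ - 10y⁴ - 84x²y² - 100x² - 4y² + 9 = 0. -/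
set_option maxHeartbeats 1000000


/-- Every P = (x,y) such that (ε₁a + ε₂b + ε₃c)² = 1 for some signs
ε₁, ε₂, ε₃ ∈ {-1,1}, where a, b, c are the distances from P to A₁ = (-1,0),
A₂ = (0,0), A₃ = (1,0), satisfies the octic equation C(x,y) = 0. -/
theorem stmt15 (x y : ℝ)
    (h : ∃ ε₁ ε₂ ε₃ : ℝ, (ε₁ = 1 ∨ ε₁ = -1) ∧ (ε₂ = 1 ∨ ε₂ = -1)
        ∧ (ε₃ = 1 ∨ ε₃ = -1)
        ∧ (ε₁ * edist2 ((-1 : ℝ), (0 : ℝ)) (x, y)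
            + ε₂ * edist2 ((0 : ℝ), (0 : ℝ)) (x, y)
            + ε₃ * edist2 ((1 : ℝ), (0 : ℝ)) (x, y))^2 = 1) :
    9*x^8 + 9*y^8 + 36*x^2*y^6 + 54*x^4*y^4 + 36*x^6*y^2 - 100*x^6 - 4*y^6
      - 108*x^2*y^4 - 204*x^4*y^2 + 182*x^4 - 10*y^4 - 84*x^2*y^2
      - 100*x^2 - 4*y^2 + 9 = 0 := by
  obtain ⟨ε₁, ε₂, ε₃, h1, h2, h3, heq⟩ := h
  set a := edist2 ((-1 : ℝ), (0 : ℝ)) (x, y) with hadef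
  set b := edist2 ((0 : ℝ), (0 : ℝ)) (x, y) with hbdef
  set c := edist2 ((1 : ℝ), (0 : ℝ)) (x, y) with hcdef
  have ha : a ^ 2 = (x + 1) ^ 2 + y ^ 2 := by
    rw [hadef, edist2, Real.sq_sqrt (by positivity)]; ring_nf
  have hb : b ^ 2 = x ^ 2 + y ^ 2 := by
    rw [hbdef, edist2, Real.sq_sqrt (by positivity)]; ring_nf
  have hc : c ^ 2 = (x - 1) ^ 2 + y ^ 2 := by
    rw [hcdef, edist2, Real.sq_sqrt (by positivity)]; ring_nf
  have hprod : ((a+b+c)^2-1) * ((a+b-c)^2-1) * ((a-b+c)^2-1) * ((a-b-c)^2-1) = 0 := by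
    rcases h1 with rfl | rfl <;> rcases h2 with rfl | rfl <;> rcases h3 with rfl | rfl
    · linear_combination (((a+b-c)^2-1) * ((a-b+c)^2-1) * ((a-b-c)^2-1)) * heq
    · linear_combination (((a+b+c)^2-1) * ((a-b+c)^2-1) * ((a-b-c)^2-1)) * heq
    · linear_combination (((a+b+c)^2-1) * ((a+b-c)^2-1) * ((a-b-c)^2-1)) * heq
    · linear_combination (((a+b+c)^2-1) * ((a+b-c)^2-1) * ((a-b+c)^2-1)) * heq
    · linear_combination (((a+b+c)^2-1) * ((a+b-c)^2-1) * ((a-b+c)^2-1)) * heq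
    · linear_combination (((a+b+c)^2-1) * ((a+b-c)^2-1) * ((a-b-c)^2-1)) * heq
    · linear_combination (((a+b+c)^2-1) * ((a-b+c)^2-1) * ((a-b-c)^2-1)) * heq
    · linear_combination (((a+b-c)^2-1) * ((a-b+c)^2-1) * ((a-b-c)^2-1)) * heq
  have e1 : ((a+b+c)^2-1) * ((a+b-c)^2-1) * ((a-b+c)^2-1) * ((a-b-c)^2-1)
      = (1)*1 + (-4)*(c^2) + (6)*(c^2)^2 + (-4)*(c^2)^3 + (1)*(c^2)^4 + (-4)*(b^2) + (4)*(b^2)*(c^2) + (4)*(b^2)*(c^2)^2 + (-4)*(b^2)*(c^2)^3 + (6)*(b^2)^2 + (4)*(b^2)^2*(c^2) + (6)*(b^2)^2*(c^2)^2 + (-4)*(b^2)^3 + (-4)*(b^2)^3*(c^2) + (1)*(b^2)^4 + (-4)*(a^2) + (4)*(a^2)*(c^2) + (4)*(a^2)*(c^2)^2 + (-4)*(a^2)*(c^2)^3 + (4)*(a^2)*(b^2) + (-40)*(a^2)*(b^2)*(c^2) + (4)*(a^2)*(b^2)*(c^2)^2 + (4)*(a^2)*(b^2)^2 + (4)*(a^2)*(b^2)^2*(c^2)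 + (-4)*(a^2)*(b^2)^3 + (6)*(a^2)^2 + (4)*(a^2)^2*(c^2) + (6)*(a^2)^2*(c^2)^2 + (4)*(a^2)^2*(b^2) + (4)*(a^2)^2*(b^2)*(c^2) + (6)*(a^2)^2*(b^2)^2 + (-4)*(a^2)^3 + (-4)*(a^2)^3*(c^2) + (-4)*(a^2)^3*(b^2) + (1)*(a^2)^4 := by
    ring
  rw [hprod, ha, hb, hc] at e1
  linear_combination -e1
end

section
/- The lemniscate polynomial L(x,y) = 3x⁴ + 6x²y² + 3y⁴ - 12x² + 4y² vanishes at a point (x,y) ∈ ℝ² if and only if there exist signs ε₁, ε₂, ε₃ ∈ {-1,1} with ε₁|A₁P| + ε₂|A₂P| + ε₃|A₃P| = 0, where P = (x,y), A₁ = (-1,0), A₂ = (0,0), A₃ = (1,0). -/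
/-- L(x,y) = 3x⁴ + 6x²y² + 3y⁴ - 12x² + 4y² vanishes at (x,y) iff there are
signs ε₁, ε₂, ε₃ ∈ {-1,1} with ε₁|A₁P| + ε₂|A₂P| + ε₃|A₃P| = 0 for P = (x,y),
A₁ = (-1,0), A₂ = (0,0), A₃ = (1,0). -/
theorem stmt17 (x y : ℝ) :
    3*x^4 + 6*x^2*y^2 + 3*y^4 - 12*x^2 + 4*y^2 = 0
    ↔ ∃ ε₁ ε₂ ε₃ : ℝ, (ε₁ = 1 ∨ ε₁ = -1) ∧ (ε₂ = 1 ∨ ε₂ = -1)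
        ∧ (ε₃ = 1 ∨ ε₃ = -1)
        ∧ ε₁ * edist2 ((-1 : ℝ), (0 : ℝ)) (x, y)
            + ε₂ * edist2 ((0 : ℝ), (0 : ℝ)) (x, y)
            + ε₃ * edist2 ((1 : ℝ), (0 : ℝ)) (x, y) = 0 := by
  have h1 : edist2 ((-1 : ℝ), (0 : ℝ)) (x, y) = Real.sqrt ((x+1)^2 + y^2) := by
    unfold edist2; congr 1; ring
  have h2 : edist2 ((0 : ℝ), (0 : ℝ)) (x, y) = Real.sqrt (x^2 + y^2) := by
    unfold edist2; congr 1; ring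
  have h3 : edist2 ((1 : ℝ), (0 : ℝ)) (x, y) = Real.sqrt ((x-1)^2 + y^2) := by
    unfold edist2; congr 1; ring
  set d1 := Real.sqrt ((x+1)^2 + y^2) with hd1
  set d2 := Real.sqrt (x^2 + y^2) with hd2
  set d3 := Real.sqrt ((x-1)^2 + y^2) with hd3
  have ha : d1^2 = (x+1)^2 + y^2 := Real.sq_sqrt (by positivity)
  have hb : d2^2 = x^2 + y^2 := Real.sq_sqrt (by positivity)
  have hc : d3^2 = (x-1)^2 + y^2 := Real.sq_sqrt (by positivity)
  have hn1 : 0 ≤ d1 := Real.sqrt_nonneg _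
  have hn2 : 0 ≤ d2 := Real.sqrt_nonneg _
  have hn3 : 0 ≤ d3 := Real.sqrt_nonneg _
  constructor
  · intro hL
    have key : (d1^2 + d2^2 - d3^2)^2 = 4*(d1*d2)^2 := by
      rw [mul_pow, ha, hb, hc]; linear_combination -hL
    have key2 : (d1^2 + d2^2 - d3^2 - 2*(d1*d2)) * (d1^2 + d2^2 - d3^2 + 2*(d1*d2)) = 0 := by
      linear_combination key
    rcases mul_eq_zero.1 key2 with h | h
    · -- d3^2 = (d1 - d2)^2
      have h' : (d3 - (d1 - d2)) * (d3 + (d1 - d2)) = 0 := by linear_combination -h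
      rcases mul_eq_zero.1 h' with h'' | h''
      · exact ⟨-1, 1, 1, Or.inr rfl, Or.inl rfl, Or.inl rfl, by
          rw [h1, h2, h3]; linarith⟩
      · exact ⟨1, -1, 1, Or.inl rfl, Or.inr rfl, Or.inl rfl, by
          rw [h1, h2, h3]; linarith⟩
    · -- d3^2 = (d1 + d2)^2
      have h' : (d3 - (d1 + d2)) * (d3 + (d1 + d2)) = 0 := by linear_combination -h
      rcases mul_eq_zero.1 h' with h'' | h''
      · exact ⟨1, 1, -1, Or.inl rfl, Or.inl rfl, Or.inr rfl, by
          rw [h1, h2, h3]; linarith⟩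
      · exact ⟨1, 1, 1, Or.inl rfl, Or.inl rfl, Or.inl rfl, by
          rw [h1, h2, h3]; linarith⟩
  · rintro ⟨e1, e2, e3, he1, he2, he3, heq⟩
    rw [h1, h2, h3] at heq
    have h1sq : e1^2 = 1 := by rcases he1 with h | h <;> rw [h] <;> norm_num
    have h2sq : e2^2 = 1 := by rcases he2 with h | h <;> rw [h] <;> norm_num
    have h3sq : e3^2 = 1 := by rcases he3 with h | h <;> rw [h] <;> norm_num
    have hstep : d3^2 = d1^2 + d2^2 + 2*(e1*e2)*(d1*d2) := by
      linear_combination (e3*d3 - e1*d1 - e2*d2) * heq - d3^2 * h3sq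
        + d1^2 * h1sq + d2^2 * h2sq
    have hstep2 : (d3^2 - d1^2 - d2^2)^2 = 4*(d1*d2)^2 := by
      linear_combination (d3^2 - d1^2 - d2^2 + 2*(e1*e2)*(d1*d2)) * hstep
        + 4*(d1*d2)^2*e2^2 * h1sq + 4*(d1*d2)^2 * h2sq
    rw [mul_pow, ha, hb, hc] at hstep2
    linear_combination -hstep2
end
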